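/- Fix γ ∈ (0, 1/2). Define the mollifier m_γ(x) = 1 for x ≥ γ, m_γ(x) = 0 for x ≤ γ/2, and m_γ(x) = 2x/γ − 1 in between, and define F(x,y) = τ(x/y)·m_γ(x)·m_γ(y) where τ(z) = (√(1/z)−1)/(√(1/z)+1). Then F : ℝ² → ℝ is (6γ^{−3/2})-Lipschitz with respect to the ℓ₁ norm. -/
import Mathlib


/-- The rho-estimator link function `τ(z) = (√(1/z) − 1)/(√(1/z) + 1)`. -/
noncomputable def tauFn (z : ℝ) : ℝ :=
  (Real.sqrt (1 / z) - 1) / (Real.sqrt (1 / z) + 1)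

/-- The mollifier `m_γ`: `1` for `x ≥ γ`, `0` for `x ≤ γ/2`, linear in between. -/
noncomputable def moll (γ x : ℝ) : ℝ :=
  if γ ≤ x then 1 else if x ≤ γ / 2 then 0 else 2 * x / γ - 1

/-- The mollified rho-loss `F(x,y) = τ(x/y)·m_γ(x)·m_γ(y)`, which vanishes whenever
`x ≤ γ/2` or `y ≤ γ/2`. -/
noncomputable def mollTau (γ x y : ℝ) : ℝ := tauFn (x / y) * moll γ x * moll γ y

lemma abs_tauFn_le_one (z : ℝ) : |tauFn z| ≤ 1 := by
  unfold tauFn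
  have h0 : (0:ℝ) ≤ Real.sqrt (1/z) := Real.sqrt_nonneg _
  rw [abs_div, abs_of_pos (by linarith : (0:ℝ) < Real.sqrt (1/z) + 1),
    div_le_one (by linarith), abs_le]
  constructor <;> linarith

lemma tauFn_eq {x y : ℝ} (hx : 0 < x) (hy : 0 < y) :
    tauFn (x / y) = (Real.sqrt y - Real.sqrt x) / (Real.sqrt y + Real.sqrt x) := by
  unfold tauFn
  have h1 : 1 / (x / y) = y / x := by field_simp
  rw [h1, Real.sqrt_div hy.le]
  have hsx : 0 < Real.sqrt x := Real.sqrt_pos.2 hx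
  have hsy : 0 < Real.sqrt y := Real.sqrt_pos.2 hy
  rw [div_eq_div_iff (by positivity) (by positivity)]
  field_simp

lemma tauFn_swap {x y : ℝ} (hx : 0 < x) (hy : 0 < y) : tauFn (x/y) = - tauFn (y/x) := by
  rw [tauFn_eq hx hy, tauFn_eq hy hx]
  have hsx : 0 < Real.sqrt x := Real.sqrt_pos.2 hx
  have hsy : 0 < Real.sqrt y := Real.sqrt_pos.2 hy
  rw [add_comm (Real.sqrt x) (Real.sqrt y), ← neg_div, neg_sub]

lemma key_frac {s a b c : ℝ} (hs : 0 < s) (ha : s ≤ a) (hb : s ≤ b) (hc : s ≤ c) :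
    |(c - a)/(c + a) - (c - b)/(c + b)| ≤ |a^2 - b^2| / s^2 := by
  have hca : 0 < c + a := by linarith
  have hcb : 0 < c + b := by linarith
  have hΔ : (c - a)/(c + a) - (c - b)/(c + b) = 2*c*(b - a)/((c+a)*(c+b)) := by
    field_simp; ring
  have h1 : |2*c*(b-a)| = 2*c*|a-b| := by
    rw [abs_mul, abs_of_pos (by linarith : (0:ℝ) < 2*c), abs_sub_comm]
  have h2 : |a^2 - b^2| = (a+b)*|a-b| := by
    rw [show a^2-b^2 = (a+b)*(a-b) by ring, abs_mul,
      abs_of_pos (by linarith : (0:ℝ) < a+b)]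
  rw [hΔ, abs_div, abs_of_pos (mul_pos hca hcb),
    div_le_div_iff₀ (mul_pos hca hcb) (by positivity), h1, h2]
  have hd : 0 ≤ |a-b| := abs_nonneg _
  have e1 : c*s ≤ (c+a)*(c+b) := by nlinarith
  have e2 : 2*c*s^2 ≤ (a+b)*((c+a)*(c+b)) := by
    nlinarith [mul_le_mul (show 2*s ≤ a+b by linarith) e1
      (by nlinarith : (0:ℝ) ≤ c*s) (by linarith : (0:ℝ) ≤ a+b)]
  nlinarith [mul_le_mul_of_nonneg_left e2 hd]

lemma tau_lip {γ : ℝ} (hγ : 0 < γ) {x y z : ℝ} (hx : γ/2 ≤ x) (hy : γ/2 ≤ y)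
    (hz : γ/2 ≤ z) : |tauFn (x/z) - tauFn (y/z)| ≤ 2/γ * |x - y| := by
  have h2 : 0 < γ/2 := by linarith
  have hx0 : 0 < x := lt_of_lt_of_le h2 hx
  have hy0 : 0 < y := lt_of_lt_of_le h2 hy
  have hz0 : 0 < z := lt_of_lt_of_le h2 hz
  rw [tauFn_eq hx0 hz0, tauFn_eq hy0 hz0]
  have hs : 0 < Real.sqrt (γ/2) := Real.sqrt_pos.2 h2
  have ha : Real.sqrt (γ/2) ≤ Real.sqrt x := Real.sqrt_le_sqrt hx
  have hb : Real.sqrt (γ/2) ≤ Real.sqrt y := Real.sqrt_le_sqrt hy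
  have hc : Real.sqrt (γ/2) ≤ Real.sqrt z := Real.sqrt_le_sqrt hz
  have h := key_frac hs ha hb hc
  rw [Real.sq_sqrt hx0.le, Real.sq_sqrt hy0.le, Real.sq_sqrt h2.le] at h
  have : |x - y| / (γ/2) = 2/γ * |x - y| := by field_simp
  linarith [this ▸ h]

lemma moll_eq {γ : ℝ} (hγ : 0 < γ) (x : ℝ) :
    moll γ x = min 1 (max 0 (2*x/γ - 1)) := by
  unfold moll
  split_ifs with h1 h2
  · have h : (2:ℝ) ≤ 2*x/γ := by rw [le_div_iff₀ hγ]; linarith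
    rw [max_eq_right (by linarith), min_eq_left (by linarith)]
  · have h : 2*x/γ ≤ 1 := by rw [div_le_one hγ]; linarith
    rw [max_eq_left (by linarith), min_eq_right (by norm_num)]
  · have hl : (1:ℝ) ≤ 2*x/γ := by rw [le_div_iff₀ hγ]; linarith
    have hu : 2*x/γ ≤ 2 := by rw [div_le_iff₀ hγ]; linarith
    rw [max_eq_right (by linarith), min_eq_right (by linarith)]

lemma moll_nonneg {γ : ℝ} (hγ : 0 < γ) (x : ℝ) : 0 ≤ moll γ x := by
  rw [moll_eq hγ]
  exact le_min (by norm_num) (le_max_left _ _)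

lemma moll_le_one {γ : ℝ} (hγ : 0 < γ) (x : ℝ) : moll γ x ≤ 1 := by
  rw [moll_eq hγ]; exact min_le_left _ _

lemma moll_of_le {γ x : ℝ} (hγ : 0 < γ) (h : x ≤ γ/2) : moll γ x = 0 := by
  unfold moll
  rw [if_neg (by linarith), if_pos h]

lemma moll_lip {γ : ℝ} (hγ : 0 < γ) (x y : ℝ) :
    |moll γ x - moll γ y| ≤ 2/γ * |x - y| := by
  rw [moll_eq hγ, moll_eq hγ]
  have h1 : |min 1 (max 0 (2*x/γ - 1)) - min 1 (max 0 (2*y/γ - 1))| ≤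
      max |(1:ℝ) - 1| |max 0 (2*x/γ - 1) - max 0 (2*y/γ - 1)| :=
    abs_min_sub_min_le_max _ _ _ _
  have h2 : |max 0 (2*x/γ - 1) - max 0 (2*y/γ - 1)| ≤ |(2*x/γ - 1) - (2*y/γ - 1)| := by
    rw [max_comm (0:ℝ), max_comm (0:ℝ)]
    exact abs_max_sub_max_le_abs _ _ _
  have h3 : |(2*x/γ - 1) - (2*y/γ - 1)| = 2/γ * |x - y| := by
    rw [show (2*x/γ - 1) - (2*y/γ - 1) = 2/γ * (x - y) by field_simp; ring, abs_mul,
      abs_of_pos (by positivity : (0:ℝ) < 2/γ)]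
  simp only [sub_self, abs_zero] at h1
  calc |min 1 (max 0 (2*x/γ - 1)) - min 1 (max 0 (2*y/γ - 1))|
      ≤ max 0 |max 0 (2*x/γ - 1) - max 0 (2*y/γ - 1)| := h1
    _ = |max 0 (2*x/γ - 1) - max 0 (2*y/γ - 1)| := max_eq_right (abs_nonneg _)
    _ ≤ |(2*x/γ - 1) - (2*y/γ - 1)| := h2
    _ = 2/γ * |x - y| := h3

lemma lip_x {γ : ℝ} (hγ : 0 < γ) (x x' y : ℝ) :
    |mollTau γ x y - mollTau γ x' y| ≤ 4/γ * |x - x'| := by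
  rcases le_or_gt y (γ/2) with hy | hy
  · simp only [mollTau, moll_of_le hγ hy, mul_zero, sub_zero, sub_self, abs_zero]
    exact mul_nonneg (div_nonneg (by norm_num) hγ.le) (abs_nonneg _)
  have hmy0 : 0 ≤ moll γ y := moll_nonneg hγ y
  have hmy1 : moll γ y ≤ 1 := moll_le_one hγ y
  have half : ∀ u v : ℝ, u ≤ γ/2 → |mollTau γ v y| ≤ 4/γ * |u - v| := by
    intro u v hu
    have hbound : |mollTau γ v y| ≤ moll γ v := by
      unfold mollTau
      rw [abs_mul, abs_mul, abs_of_nonneg (moll_nonneg hγ v), abs_of_nonneg hmy0]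
      calc |tauFn (v/y)| * moll γ v * moll γ y ≤ 1 * moll γ v * 1 := by
            apply mul_le_mul
            · exact mul_le_mul_of_nonneg_right (abs_tauFn_le_one _) (moll_nonneg hγ v)
            · exact hmy1
            · exact hmy0
            · simpa using moll_nonneg hγ v
        _ = moll γ v := by ring
    have h2 : moll γ v = |moll γ v - moll γ u| := by
      rw [moll_of_le hγ hu, sub_zero, abs_of_nonneg (moll_nonneg hγ v)]
    have h3 := moll_lip hγ v u
    rw [← h2] at h3
    have h4 : |v - u| = |u - v| := abs_sub_comm _ _
    have h5 : 2/γ * |u - v| ≤ 4/γ * |u - v| := by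
      apply mul_le_mul_of_nonneg_right _ (abs_nonneg _)
      rw [div_le_div_iff₀ hγ hγ]; nlinarith
    calc |mollTau γ v y| ≤ moll γ v := hbound
      _ ≤ 2/γ * |v - u| := h3
      _ = 2/γ * |u - v| := by rw [h4]
      _ ≤ 4/γ * |u - v| := h5
  rcases le_or_gt x (γ/2) with hx | hx <;> rcases le_or_gt x' (γ/2) with hx' | hx'
  · simp only [mollTau, moll_of_le hγ hx, moll_of_le hγ hx', mul_zero, zero_mul,
      sub_zero, abs_zero]
    exact mul_nonneg (div_nonneg (by norm_num) hγ.le) (abs_nonneg _)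
  · have h := half x x' hx
    have hz : mollTau γ x y = 0 := by simp [mollTau, moll_of_le hγ hx]
    rw [hz, zero_sub, abs_neg]
    exact h
  · have h := half x' x hx'
    have hz : mollTau γ x' y = 0 := by simp [mollTau, moll_of_le hγ hx']
    rw [hz, sub_zero]
    calc |mollTau γ x y| ≤ 4/γ * |x' - x| := h
      _ = 4/γ * |x - x'| := by rw [abs_sub_comm]
  · -- both x, x' > γ/2
    have e : mollTau γ x y - mollTau γ x' y =
        (tauFn (x/y) - tauFn (x'/y)) * (moll γ x * moll γ y) +
        tauFn (x'/y) * ((moll γ x - moll γ x') * moll γ y) := by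
      unfold mollTau; ring
    have hp : 0 ≤ moll γ x * moll γ y := mul_nonneg (moll_nonneg hγ x) hmy0
    have hp1 : moll γ x * moll γ y ≤ 1 :=
      mul_le_one₀ (moll_le_one hγ x) hmy0 hmy1
    have ht1 : |(tauFn (x/y) - tauFn (x'/y)) * (moll γ x * moll γ y)| ≤
        |tauFn (x/y) - tauFn (x'/y)| := by
      rw [abs_mul, abs_of_nonneg hp]
      exact mul_le_of_le_one_right (abs_nonneg _) hp1
    have ht2 : |tauFn (x'/y) * ((moll γ x - moll γ x') * moll γ y)| ≤
        |moll γ x - moll γ x'| := by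
      rw [abs_mul, abs_mul, abs_of_nonneg hmy0]
      calc |tauFn (x'/y)| * (|moll γ x - moll γ x'| * moll γ y)
          ≤ 1 * (|moll γ x - moll γ x'| * 1) := by
            apply mul_le_mul (abs_tauFn_le_one _) _ (by positivity) zero_le_one
            exact mul_le_mul_of_nonneg_left hmy1 (abs_nonneg _)
        _ = |moll γ x - moll γ x'| := by ring
    have hτ : |tauFn (x/y) - tauFn (x'/y)| ≤ 2/γ * |x - x'| :=
      tau_lip hγ hx.le hx'.le hy.le
    have hm := moll_lip hγ x x'
    calc |mollTau γ x y - mollTau γ x' y|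
        ≤ |(tauFn (x/y) - tauFn (x'/y)) * (moll γ x * moll γ y)| +
          |tauFn (x'/y) * ((moll γ x - moll γ x') * moll γ y)| := by
          rw [e]; exact abs_add_le _ _
      _ ≤ 2/γ * |x - x'| + 2/γ * |x - x'| := by
          have := ht1.trans hτ
          have := ht2.trans hm
          linarith
      _ = 4/γ * |x - x'| := by ring

lemma mollTau_antisymm {γ : ℝ} (hγ : 0 < γ) (x y : ℝ) :
    mollTau γ x y = - mollTau γ y x := by
  rcases le_or_gt x (γ/2) with hx | hx
  · simp [mollTau, moll_of_le hγ hx]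
  rcases le_or_gt y (γ/2) with hy | hy
  · simp [mollTau, moll_of_le hγ hy]
  have hx0 : 0 < x := by linarith
  have hy0 : 0 < y := by linarith
  unfold mollTau
  rw [tauFn_swap hx0 hy0]
  ring

lemma lip_y {γ : ℝ} (hγ : 0 < γ) (x y y' : ℝ) :
    |mollTau γ x y - mollTau γ x y'| ≤ 4/γ * |y - y'| := by
  rw [mollTau_antisymm hγ x y, mollTau_antisymm hγ x y',
    show -mollTau γ y x - -mollTau γ y' x = -(mollTau γ y x - mollTau γ y' x) by ring,
    abs_neg]
  exact lip_x hγ y y' x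

/-- The mollified rho-loss `F` is `6γ^{−3/2}`-Lipschitz with respect to the `ℓ₁` norm. -/
theorem mollTau_lipschitz (γ : ℝ) (hγ : γ ∈ Set.Ioo (0 : ℝ) (1 / 2)) :
    ∀ x y x' y' : ℝ,
      |mollTau γ x y - mollTau γ x' y'| ≤
        6 / γ ^ ((3 : ℝ) / 2) * (|x - x'| + |y - y'|) := by
  obtain ⟨hγ0, hγ1⟩ := hγ
  intro x y x' y'
  have h1 := lip_x hγ0 x x' y
  have h2 := lip_y hγ0 x' y y'
  have htri : |mollTau γ x y - mollTau γ x' y'| ≤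
      |mollTau γ x y - mollTau γ x' y| + |mollTau γ x' y - mollTau γ x' y'| :=
    abs_sub_le _ _ _
  have hr : γ ^ ((3:ℝ)/2) = γ * Real.sqrt γ := by
    rw [show ((3:ℝ)/2) = 1 + 1/2 by norm_num, Real.rpow_add hγ0, Real.rpow_one,
      ← Real.sqrt_eq_rpow]
  have hs1 : Real.sqrt γ ≤ 1 := Real.sqrt_le_one.mpr (by linarith)
  have hs0 : 0 < Real.sqrt γ := Real.sqrt_pos.2 hγ0
  have hc : 4/γ ≤ 6/γ^((3:ℝ)/2) := by
    rw [hr, div_le_div_iff₀ hγ0 (by positivity)]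
    nlinarith
  calc |mollTau γ x y - mollTau γ x' y'|
      ≤ 4/γ * |x - x'| + 4/γ * |y - y'| := by linarith
    _ = 4/γ * (|x - x'| + |y - y'|) := by ring
    _ ≤ 6/γ^((3:ℝ)/2) * (|x - x'| + |y - y'|) :=
        mul_le_mul_of_nonneg_right hc (by positivity)
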